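/- arXiv:2507.00148 — 2 statements merged into one kernel-verified Lean document; each statement's English description precedes it below -/
import Mathlib

section
/- For every Boolean function f : {0,1}^n → {0,1}, the deterministic u-query complexity satisfies D_u(f) ≤ cc_u(f) · bs_u(f). -/
attribute [local instance 0] Classical.propDecidable

/-- Ternary values: `none` represents the uncertain value `u`,
`some b` represents the Boolean value `b`. -/
abbrev TVal := Option Bool

/-- The resolutions of `x ∈ {0,u,1}^ι`: all Boolean strings agreeing with
the determined coordinates of `x`. -/
def Res {ι : Type} (x : ι → Option Bool) : Set (ι → Bool) :=
  {y | ∀ i b, x i = some b → y i = b}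

/-- The hazard-free extension of a Boolean function `f`. -/
noncomputable def hfext {ι : Type} (f : (ι → Bool) → Bool) (x : ι → Option Bool) :
    Option Bool :=
  if ∀ y ∈ Res x, f y = true then some true
  else if ∀ y ∈ Res x, f y = false then some false
  else none

/-- Number of uncertain (`u`) coordinates of `x`. -/
noncomputable def uCount {ι : Type} [Fintype ι] (x : ι → Option Bool) : ℕ :=
  (Finset.univ.filter fun i : ι => x i = none).card

/-- u-sensitivity of `f` at `x`: the number of coordinates `i` such that
changing only coordinate `i` can change the value of the hazard-free extension. -/
noncomputable def sensAt {ι : Type} [Fintype ι] (f : (ι → Bool) → Bool)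
    (x : ι → Option Bool) : ℕ :=
  (Finset.univ.filter fun i : ι => ∃ y : ι → Option Bool,
      y i ≠ x i ∧ (∀ j, j ≠ i → y j = x j) ∧ hfext f y ≠ hfext f x).card

/-- u-sensitivity of `f`. -/
noncomputable def sensU {ι : Type} [Fintype ι] [DecidableEq ι]
    (f : (ι → Bool) → Bool) : ℕ :=
  Finset.univ.sup fun x : ι → Option Bool => sensAt f x

/-- u-sensitivity of `f` restricted to inputs whose hazard-free value is `b`. -/
noncomputable def sensULevel {ι : Type} [Fintype ι] [DecidableEq ι]
    (f : (ι → Bool) → Bool) (b : Option Bool) : ℕ :=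
  (Finset.univ.filter fun x : ι → Option Bool => hfext f x = b).sup (sensAt f)

/-- Boolean sensitivity of `f` at a Boolean input `x`. -/
noncomputable def boolSensAt {ι : Type} [Fintype ι] [DecidableEq ι]
    (f : (ι → Bool) → Bool) (x : ι → Bool) : ℕ :=
  (Finset.univ.filter fun i : ι => f (Function.update x i (!x i)) ≠ f x).card

/-- Boolean sensitivity of `f`. -/
noncomputable def boolSens {ι : Type} [Fintype ι] [DecidableEq ι]
    (f : (ι → Bool) → Bool) : ℕ :=
  Finset.univ.sup (boolSensAt f)

/-- There are `k` pairwise disjoint blocks, each of which is sensitive for the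
hazard-free extension of `f` at `x`. -/
def HasSensBlocks {ι : Type} (f : (ι → Bool) → Bool) (x : ι → Option Bool)
    (k : ℕ) : Prop :=
  ∃ (B : Fin k → Set ι) (y : Fin k → ι → Option Bool),
    (∀ j j', j ≠ j' → Disjoint (B j) (B j')) ∧
    ∀ j, (∀ i, y j i ≠ x i ↔ i ∈ B j) ∧ hfext f (y j) ≠ hfext f x

/-- u-block sensitivity of `f`. -/
noncomputable def bsU {ι : Type} (f : (ι → Bool) → Bool) : ℕ :=
  sSup {k | ∃ x, HasSensBlocks f x k}

/-- A ternary string `y` is consistent with a partial assignment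
`p : ι → Option (Option Bool)` (`none` = `*`). -/
def Consistent {ι : Type} (y : ι → Option Bool) (p : ι → Option (Option Bool)) :
    Prop :=
  ∀ i v, p i = some v → y i = v

/-- `p` is a certificate for the hazard-free extension of `f` at `x`. -/
def IsCert {ι : Type} (f : (ι → Bool) → Bool) (x : ι → Option Bool)
    (p : ι → Option (Option Bool)) : Prop :=
  Consistent x p ∧ ∀ y, Consistent y p → hfext f y = hfext f x

/-- Size of a partial assignment: the number of non-`*` coordinates. -/
noncomputable def certSize {ι : Type} [Fintype ι] (p : ι → Option (Option Bool)) :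
    ℕ :=
  (Finset.univ.filter fun i : ι => p i ≠ none).card

/-- u-certificate complexity of `f` at `x`. -/
noncomputable def ccAt {ι : Type} [Fintype ι] (f : (ι → Bool) → Bool)
    (x : ι → Option Bool) : ℕ :=
  sInf {k | ∃ p, IsCert f x p ∧ certSize p = k}

/-- u-certificate complexity of `f`. -/
noncomputable def ccU {ι : Type} [Fintype ι] [DecidableEq ι]
    (f : (ι → Bool) → Bool) : ℕ :=
  Finset.univ.sup fun x : ι → Option Bool => ccAt f x

/-- u-certificate complexity of `f` restricted to inputs with hazard-free value `b`. -/
noncomputable def ccULevel {ι : Type} [Fintype ι] [DecidableEq ι]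
    (f : (ι → Bool) → Bool) (b : Option Bool) : ℕ :=
  (Finset.univ.filter fun x : ι → Option Bool => hfext f x = b).sup (ccAt f)

/-- A set of literals (at most one per variable), encoded as a partial Boolean
assignment `q : ι → Option Bool`, is an implicant of `f` if `f` is `true` on
every Boolean input extending `q`. -/
def IsImplicant {ι : Type} (f : (ι → Bool) → Bool) (q : ι → Option Bool) : Prop :=
  ∀ y : ι → Bool, (∀ i b, q i = some b → y i = b) → f y = true

/-- Dually, an implicate of `f` forces the value `false`. -/
def IsImplicate {ι : Type} (f : (ι → Bool) → Bool) (q : ι → Option Bool) : Prop :=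
  ∀ y : ι → Bool, (∀ i b, q i = some b → y i = b) → f y = false

/-- `q'` is a (literal-)subset of `q`. -/
def SubAsn {ι : Type} (q' q : ι → Option Bool) : Prop :=
  ∀ i b, q' i = some b → q i = some b

def IsPrimeImplicant {ι : Type} (f : (ι → Bool) → Bool) (q : ι → Option Bool) :
    Prop :=
  IsImplicant f q ∧ ∀ q', SubAsn q' q → q' ≠ q → ¬ IsImplicant f q'

def IsPrimeImplicate {ι : Type} (f : (ι → Bool) → Bool) (q : ι → Option Bool) :
    Prop :=
  IsImplicate f q ∧ ∀ q', SubAsn q' q → q' ≠ q → ¬ IsImplicate f q'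

/-- Number of literals of a partial assignment. -/
noncomputable def asnSize {ι : Type} [Fintype ι] (q : ι → Option Bool) : ℕ :=
  (Finset.univ.filter fun i : ι => q i ≠ none).card

/-- Ternary decision trees: internal nodes query a variable and branch on the
three possible values `0`, `u`, `1`; leaves output a value in `{0,u,1}`. -/
inductive TTree (ι : Type) : Type where
  | leaf : Option Bool → TTree ι
  | node : ι → TTree ι → TTree ι → TTree ι → TTree ι

namespace TTree

def eval {ι : Type} : TTree ι → (ι → Option Bool) → Option Bool
  | .leaf b, _ => b
  | .node i t0 tu t1, x =>
    match x i with
    | some false => eval t0 x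
    | none => eval tu x
    | some true => eval t1 x

def depth {ι : Type} : TTree ι → ℕ
  | .leaf _ => 0
  | .node _ t0 tu t1 => max (max t0.depth tu.depth) t1.depth + 1

/-- Size of a tree: its number of leaves. -/
def size {ι : Type} : TTree ι → ℕ
  | .leaf _ => 1
  | .node _ t0 tu t1 => t0.size + tu.size + t1.size

end TTree

/-- Boolean decision trees. -/
inductive BTree (ι : Type) : Type where
  | leaf : Bool → BTree ι
  | node : ι → BTree ι → BTree ι → BTree ι

namespace BTree

def eval {ι : Type} : BTree ι → (ι → Bool) → Bool
  | .leaf b, _ => b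
  | .node i t0 t1, x => if x i then eval t1 x else eval t0 x

def depth {ι : Type} : BTree ι → ℕ
  | .leaf _ => 0
  | .node _ t0 t1 => max t0.depth t1.depth + 1

/-- Size of a tree: its number of leaves. -/
def size {ι : Type} : BTree ι → ℕ
  | .leaf _ => 1
  | .node _ t0 t1 => t0.size + t1.size

end BTree

/-- Deterministic u-query complexity: minimal depth of a ternary decision tree
computing the hazard-free extension of `f`. -/
noncomputable def Du {ι : Type} (f : (ι → Bool) → Bool) : ℕ :=
  sInf {d | ∃ T : TTree ι, (∀ x, T.eval x = hfext f x) ∧ T.depth = d}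

/-- Minimal number of leaves of a ternary decision tree computing the
hazard-free extension of `f`. -/
noncomputable def sizeU {ι : Type} (f : (ι → Bool) → Bool) : ℕ :=
  sInf {s | ∃ T : TTree ι, (∀ x, T.eval x = hfext f x) ∧ T.size = s}

/-- Deterministic (Boolean) query complexity of `f`. -/
noncomputable def Dbool {ι : Type} (f : (ι → Bool) → Bool) : ℕ :=
  sInf {d | ∃ T : BTree ι, (∀ x, T.eval x = f x) ∧ T.depth = d}

/-- Minimal number of leaves of a Boolean decision tree computing `f`. -/
noncomputable def sizeBool {ι : Type} (f : (ι → Bool) → Bool) : ℕ :=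
  sInf {s | ∃ T : BTree ι, (∀ x, T.eval x = f x) ∧ T.size = s}

/-- Index type for `MUX_n`: `n` selector bits and `2^n` data bits. -/
abbrev MUXIdx (n : ℕ) := Fin n ⊕ (Fin n → Bool)

/-- The multiplexer function: output the data bit addressed by the selector bits. -/
def MUX (n : ℕ) (z : MUXIdx n → Bool) : Bool :=
  z (Sum.inr fun i => z (Sum.inl i))

/-!
Nisan's certificate-times-block-sensitivity argument, run on subcubes of `{0,u,1}ⁿ`.
For a subcube `ρ`, let `μ(ρ)` be the largest number of disjoint sensitive blocks at an input of
`ρ` with determined hazard-free value, all flipped inputs staying in `ρ`. If `f̃` is not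
constant on `ρ`, it takes the value `u` at some `w ∈ ρ` (put `u` wherever two inputs of `ρ`
with different values disagree). Query all variables of a minimal certificate of `w`. After any
answers, an input `x` of the smaller subcube overwritten by `w` on the certificate has value
`u ≠ f̃ x`, and this block is disjoint from every block inside the smaller subcube. So each round
of at most `cc_u(f)` queries lowers `μ` by one, and `μ ≤ bs_u(f)` at the start.
-/

open Function

theorem Fin.pairwise_cons {α : Type*} {r : α → α → Prop} {k : ℕ} {a : α} {v : Fin k → α}
    (ha : ∀ j, r a (v j)) (ha' : ∀ j, r (v j) a) (hv : Pairwise (r on v)) :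
    Pairwise (r on (Fin.cons a v : Fin (k + 1) → α)) := by
  intro i j hij
  cases i using Fin.cases <;> cases j using Fin.cases
  · exact absurd rfl hij
  · exact ha _
  · exact ha' _
  · exact hv fun h => hij (congrArg Fin.succ h)

namespace TTree

variable {ι : Type}

theorem eval_node_eq (i : ι) (t : Option Bool → TTree ι) (x : ι → Option Bool) :
    (node i (t (some false)) (t none) (t (some true))).eval x = (t (x i)).eval x := by
  rcases h : x i with _ | _ | _ <;> simp [eval, h]

theorem depth_node_le {i : ι} {t₀ tᵤ t₁ : TTree ι} {d : ℕ} (h₀ : t₀.depth ≤ d)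
    (hᵤ : tᵤ.depth ≤ d) (h₁ : t₁.depth ≤ d) : (node i t₀ tᵤ t₁).depth ≤ d + 1 := by
  simp only [depth]
  omega

theorem exists_depth_le_add_card_eqOn (g : (ι → Option Bool) → Option Bool) (S : Finset ι)
    (d : ℕ) (A : Set (ι → Option Bool))
    (h : ∀ x₀ ∈ A, ∃ T : TTree ι, T.depth ≤ d ∧
      Set.EqOn T.eval g {x ∈ A | ∀ i ∈ S, x i = x₀ i}) :
    ∃ T : TTree ι, T.depth ≤ d + S.card ∧ Set.EqOn T.eval g A := by
  induction S using Finset.induction_on generalizing A with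
  | empty =>
    rcases A.eq_empty_or_nonempty with rfl | ⟨x₀, hx₀⟩
    · exact ⟨leaf none, Nat.zero_le _, Set.eqOn_empty _ _⟩
    · obtain ⟨T, hd, hT⟩ := h x₀ hx₀
      exact ⟨T, hd, fun x hx => hT ⟨hx, by simp⟩⟩
  | insert i S hi ih =>
    have hbranch : ∀ v : Option Bool, ∃ T : TTree ι, T.depth ≤ d + S.card ∧
        Set.EqOn T.eval g {x ∈ A | x i = v} := fun v =>
      ih _ fun x₀ ⟨hx₀, hx₀i⟩ => by
        obtain ⟨T, hd, hT⟩ := h x₀ hx₀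
        refine ⟨T, hd, fun x ⟨⟨hx, hxi⟩, hS⟩ => hT ⟨hx, ?_⟩⟩
        exact Finset.forall_mem_insert _ _ _ |>.2 ⟨hxi.trans hx₀i.symm, hS⟩
    choose t ht hT using hbranch
    refine ⟨node i (t (some false)) (t none) (t (some true)), ?_, fun x hx => ?_⟩
    · rw [Finset.card_insert_of_notMem hi, ← add_assoc]
      exact depth_node_le (ht _) (ht _) (ht _)
    · rw [eval_node_eq]
      exact hT _ ⟨hx, rfl⟩

end TTree

section

variable {ι : Type} {f : (ι → Bool) → Bool}

theorem hfext_eq_some_iff {x : ι → Option Bool} {b : Bool} :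
    hfext f x = some b ↔ ∀ y ∈ Res x, f y = b := by
  have hy₀ : (fun i => (x i).getD false) ∈ Res x := fun i b h => by simp [h]
  unfold hfext
  split_ifs with h₁ h₂
  · exact ⟨by rintro ⟨⟩; exact h₁, fun h => by rw [← h _ hy₀, h₁ _ hy₀]⟩
  · exact ⟨by rintro ⟨⟩; exact h₂, fun h => by rw [← h _ hy₀, h₂ _ hy₀]⟩
  · simp only [false_iff]
    intro h
    cases b <;> contradiction

theorem hfext_eq_of_res_subset {x z : ι → Option Bool} (h : Res x ⊆ Res z) {b : Bool}
    (hz : hfext f z = some b) : hfext f x = some b :=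
  hfext_eq_some_iff.2 fun y hy => hfext_eq_some_iff.1 hz y (h hy)

theorem exists_hfext_eq_none_of_ne {ρ : ι → Option (Option Bool)} {x x' : ι → Option Bool}
    (hx : Consistent x ρ) (hx' : Consistent x' ρ) (hne : hfext f x ≠ hfext f x') :
    ∃ w, Consistent w ρ ∧ hfext f w = none := by
  set w : ι → Option Bool := fun i => if x i = x' i then x i else none
  have hw : Consistent w ρ := fun i v hi => by simp [w, hx i v hi, hx' i v hi]
  have hres : Res x ⊆ Res w := fun y hy i b hi => by
    simp only [w] at hi
    split_ifs at hi
    exact hy i b hi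
  have hres' : Res x' ⊆ Res w := fun y hy i b hi => by
    simp only [w] at hi
    split_ifs at hi with hxx'
    exact hy i b (hxx' ▸ hi)
  rcases hwv : hfext f w with _ | b
  · exact ⟨w, hw, hwv⟩
  · exact absurd (by rw [hfext_eq_of_res_subset hres hwv, hfext_eq_of_res_subset hres' hwv]) hne

theorem HasSensBlocks.le_card [Fintype ι] {x : ι → Option Bool} {k : ℕ}
    (h : HasSensBlocks f x k) : k ≤ Fintype.card ι := by
  obtain ⟨B, y, hdisj, hy⟩ := h
  have hne : ∀ j, (B j).Nonempty := fun j => by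
    by_contra hemp
    refine (hy j).2 (congrArg _ (funext fun i => ?_))
    by_contra hi
    exact hemp ⟨i, ((hy j).1 i).1 hi⟩
  choose c hc using hne
  have hc_inj : Function.Injective c := fun j j' hjj => by
    by_contra hne
    exact Set.disjoint_left.1 (hdisj j j' hne) (hc j) (hjj ▸ hc j')
  simpa using Fintype.card_le_of_injective c hc_inj

variable (f)

theorem bddAbove_hasSensBlocks [Fintype ι] : BddAbove {k | ∃ x, HasSensBlocks f x k} :=
  ⟨Fintype.card ι, fun _ ⟨_, h⟩ => h.le_card⟩

theorem exists_isCert_certSize_le_ccU [Fintype ι] [DecidableEq ι] (w : ι → Option Bool) :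
    ∃ p, IsCert f w p ∧ certSize p ≤ ccU f := by
  have hne : {k | ∃ p, IsCert f w p ∧ certSize p = k}.Nonempty :=
    ⟨_, fun i => some (w i), ⟨fun _ _ h => Option.some.inj h,
      fun y hy => by rw [show y = w from funext fun i => hy i _ rfl]⟩, rfl⟩
  obtain ⟨p, hp, hsize⟩ := Nat.sInf_mem hne
  exact ⟨p, hp, hsize ▸ Finset.le_sup (f := ccAt f) (Finset.mem_univ w)⟩

theorem exists_const_or_exists_ne (ρ : ι → Option (Option Bool)) :
    (∃ c, ∀ x, Consistent x ρ → hfext f x = c) ∨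
      ∃ x x', Consistent x ρ ∧ Consistent x' ρ ∧ hfext f x ≠ hfext f x' := by
  set x₀ : ι → Option Bool := fun i => (ρ i).getD none
  have hx₀ : Consistent x₀ ρ := fun i v h => by simp [x₀, h]
  by_cases h : ∀ x, Consistent x ρ → hfext f x = hfext f x₀
  · exact Or.inl ⟨_, h⟩
  · push Not at h
    obtain ⟨x, hx, hne⟩ := h
    exact Or.inr ⟨x, x₀, hx, hx₀, hne⟩

/-- The blocks counted by `μ(ρ) = bsUDetOn f ρ`. Only inputs with determined value are used,
since the certificate block of a `u`-input is sensitive exactly at those. -/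
def DetSensBlocksOn (ρ : ι → Option (Option Bool)) (k : ℕ) : Prop :=
  ∃ x, Consistent x ρ ∧ hfext f x ≠ none ∧ ∃ y : Fin k → ι → Option Bool,
    (∀ j, Consistent (y j) ρ ∧ hfext f (y j) ≠ hfext f x) ∧
    Pairwise (Disjoint on fun j => {i | y j i ≠ x i})

noncomputable def bsUDetOn (ρ : ι → Option (Option Bool)) : ℕ :=
  sSup {k | DetSensBlocksOn f ρ k}

variable {f}

theorem DetSensBlocksOn.exists_hasSensBlocks {ρ : ι → Option (Option Bool)} {k : ℕ}
    (h : DetSensBlocksOn f ρ k) : ∃ x, HasSensBlocks f x k := by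
  obtain ⟨x, -, -, y, hy, hdisj⟩ := h
  exact ⟨x, fun j => {i | y j i ≠ x i}, y, fun _ _ h => hdisj h,
    fun j => ⟨fun _ => Iff.rfl, (hy j).2⟩⟩

theorem bddAbove_detSensBlocksOn [Fintype ι] (ρ : ι → Option (Option Bool)) :
    BddAbove {k | DetSensBlocksOn f ρ k} :=
  (bddAbove_hasSensBlocks f).mono fun _ h => h.exists_hasSensBlocks

theorem bsUDetOn_le_bsU [Fintype ι] (ρ : ι → Option (Option Bool)) : bsUDetOn f ρ ≤ bsU f := by
  rcases Set.eq_empty_or_nonempty {k | DetSensBlocksOn f ρ k} with h | h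
  · simp [bsUDetOn, h]
  · exact csSup_le_csSup (bddAbove_hasSensBlocks f) h fun _ hk => hk.exists_hasSensBlocks

theorem DetSensBlocksOn.le_bsUDetOn [Fintype ι] {ρ : ι → Option (Option Bool)} {k : ℕ}
    (h : DetSensBlocksOn f ρ k) : k ≤ bsUDetOn f ρ :=
  le_csSup (bddAbove_detSensBlocksOn ρ) h

theorem detSensBlocksOn_one_of_ne {ρ : ι → Option (Option Bool)} {x x' : ι → Option Bool}
    (hx : Consistent x ρ) (hx' : Consistent x' ρ) (hne : hfext f x ≠ hfext f x') :
    DetSensBlocksOn f ρ 1 := by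
  wlog hdet : hfext f x ≠ none generalizing x x'
  · exact this hx' hx hne.symm (by rw [not_not.1 hdet] at hne; exact hne.symm)
  exact ⟨x, hx, hdet, fun _ => x', fun _ => ⟨hx', hne.symm⟩, Subsingleton.pairwise⟩

theorem detSensBlocksOn_succ_of_isCert {ρ ρ' p : ι → Option (Option Bool)}
    {w : ι → Option Bool} {k : ℕ} (hw : Consistent w ρ) (hwu : hfext f w = none)
    (hp : IsCert f w p) (hρρ' : ∀ i v, ρ i = some v → ρ' i = some v)
    (hpρ' : ∀ i, p i ≠ none → ρ' i ≠ none) (h : DetSensBlocksOn f ρ' k) :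
    DetSensBlocksOn f ρ (k + 1) := by
  obtain ⟨x, hx, hxdet, y, hy, hdisj⟩ := h
  set z : ι → Option Bool := fun i => if p i = none then x i else w i
  have hzp : Consistent z p := fun i v hi => by simp [z, hi, hp.1 i v hi]
  have hzρ : Consistent z ρ := fun i v hi => by
    by_cases hpi : p i = none <;> simp [z, hpi, hw i v hi, hx i v (hρρ' i v hi)]
  have hzu : hfext f z = none := (hp.2 z hzp).trans hwu
  have hzy : ∀ j, Disjoint {i | z i ≠ x i} {i | y j i ≠ x i} := fun j =>
    Set.disjoint_left.2 fun i hi hyi => by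
      have hpi : p i ≠ none := fun hpi => hi (by simp [z, hpi])
      obtain ⟨v, hv⟩ := Option.ne_none_iff_exists'.1 (hpρ' i hpi)
      exact hyi ((hy j).1 i v hv |>.trans (hx i v hv).symm)
  refine ⟨x, fun i v hi => hx i v (hρρ' i v hi), hxdet, Fin.cons z y, fun j => ?_, ?_⟩
  · cases j using Fin.cases with
    | zero => exact ⟨hzρ, hzu ▸ hxdet.symm⟩
    | succ j => exact ⟨fun i v hi => (hy j).1 i v (hρρ' i v hi), (hy j).2⟩
  · exact Fin.pairwise_cons (r := Disjoint on fun y : ι → Option Bool => {i | y i ≠ x i})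
      hzy (fun j => (hzy j).symm) hdisj

theorem bsUDetOn_le_of_isCert [Fintype ι] {ρ ρ' p : ι → Option (Option Bool)}
    {w : ι → Option Bool} {k : ℕ} (hw : Consistent w ρ) (hwu : hfext f w = none)
    (hp : IsCert f w p) (hρρ' : ∀ i v, ρ i = some v → ρ' i = some v)
    (hpρ' : ∀ i, p i ≠ none → ρ' i ≠ none) (hk : bsUDetOn f ρ ≤ k + 1) :
    bsUDetOn f ρ' ≤ k := by
  rcases Set.eq_empty_or_nonempty {k | DetSensBlocksOn f ρ' k} with h | h
  · simp [bsUDetOn, h]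
  · have hmax : DetSensBlocksOn f ρ' (bsUDetOn f ρ') :=
      Nat.sSup_mem h (bddAbove_detSensBlocksOn ρ')
    have := (detSensBlocksOn_succ_of_isCert hw hwu hp hρρ' hpρ' hmax).le_bsUDetOn
    omega

variable [Fintype ι] [DecidableEq ι]

theorem exists_depth_le_succ_of_ne {ρ : ι → Option (Option Bool)} {k : ℕ}
    (ih : ∀ ρ', bsUDetOn f ρ' ≤ k →
      ∃ T : TTree ι, T.depth ≤ ccU f * k ∧ Set.EqOn T.eval (hfext f) {x | Consistent x ρ'})
    (hk : bsUDetOn f ρ ≤ k + 1) {x x' : ι → Option Bool} (hx : Consistent x ρ)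
    (hx' : Consistent x' ρ) (hne : hfext f x ≠ hfext f x') :
    ∃ T : TTree ι, T.depth ≤ ccU f * (k + 1) ∧
      Set.EqOn T.eval (hfext f) {x | Consistent x ρ} := by
  obtain ⟨w, hw, hwu⟩ := exists_hfext_eq_none_of_ne hx hx' hne
  obtain ⟨p, hp, hpsize⟩ := exists_isCert_certSize_le_ccU f w
  obtain ⟨T, hd, hT⟩ := TTree.exists_depth_le_add_card_eqOn (hfext f)
    {i | p i ≠ none} (ccU f * k) {x | Consistent x ρ} fun x₀ hx₀ => by
      set ρ' : ι → Option (Option Bool) := fun i => if p i = none then ρ i else some (x₀ i)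
      have hρρ' : ∀ i v, ρ i = some v → ρ' i = some v := fun i v hi => by
        by_cases hpi : p i = none <;> simp [ρ', hpi, hi, hx₀ i v hi]
      have hpρ' : ∀ i, p i ≠ none → ρ' i ≠ none := fun i hpi => by simp [ρ', hpi]
      obtain ⟨T, hd, hT⟩ := ih ρ' (bsUDetOn_le_of_isCert hw hwu hp hρρ' hpρ' hk)
      refine ⟨T, hd, hT.mono fun x ⟨hx, hS⟩ => show Consistent x ρ' from fun i v hi => ?_⟩
      by_cases hpi : p i = none
      · simp only [ρ', hpi, if_true] at hi
        exact hx i v hi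
      · simp only [ρ', hpi, if_false, Option.some.injEq] at hi
        simpa [← hi] using hS i (by simpa using hpi)
  refine ⟨T, hd.trans ?_, hT⟩
  calc ccU f * k + _ ≤ ccU f * k + ccU f := Nat.add_le_add_left hpsize _
    _ = ccU f * (k + 1) := by ring

theorem exists_depth_le_ccU_mul (k : ℕ) (ρ : ι → Option (Option Bool))
    (hk : bsUDetOn f ρ ≤ k) :
    ∃ T : TTree ι, T.depth ≤ ccU f * k ∧ Set.EqOn T.eval (hfext f) {x | Consistent x ρ} := by
  induction k generalizing ρ with
  | zero =>
    obtain ⟨c, hc⟩ | ⟨x, x', hx, hx', hne⟩ := exists_const_or_exists_ne f ρ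
    · exact ⟨.leaf c, Nat.zero_le _, fun x hx => (hc x hx).symm⟩
    · have := (detSensBlocksOn_one_of_ne hx hx' hne).le_bsUDetOn
      omega
  | succ k ih =>
    obtain ⟨c, hc⟩ | ⟨x, x', hx, hx', hne⟩ := exists_const_or_exists_ne f ρ
    · exact ⟨.leaf c, Nat.zero_le _, fun x hx => (hc x hx).symm⟩
    · exact exists_depth_le_succ_of_ne ih hk hx hx' hne

end

/-- The deterministic u-query complexity is at most `cc_u(f) · bs_u(f)`. -/
theorem stmt3 {n : ℕ} (f : (Fin n → Bool) → Bool) :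
    Du f ≤ ccU f * bsU f := by
  obtain ⟨T, hd, hT⟩ := exists_depth_le_ccU_mul (bsU f) (fun _ => none) (bsUDetOn_le_bsU _)
  unfold Du
  exact le_trans (Nat.sInf_le ⟨T, fun x => hT (fun _ _ h => nomatch h), rfl⟩) hd
end

section
/- Let f : {0,1}^n → {0,1} be non-constant, let k1 be the size of a largest prime implicant of f and k2 the size of a largest prime implicate of f. Then cc_u^(1)(f) = k1 and cc_u^(0)(f) = k2, where cc_u^(b)(f) is the maximum over x ∈ {0,u,1}^n with f̃(x) = b of the minimum size of a certificate for f̃ at x. -/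
attribute [local instance 0] Classical.propDecidable

section Aux

variable {ι : Type}

lemma res_nonempty (x : ι → Option Bool) : (Res x).Nonempty :=
  ⟨fun i => (x i).getD false, fun i b h => by simp [h]⟩

lemma hfext_true_iff (f : (ι → Bool) → Bool) (x : ι → Option Bool) :
    hfext f x = some true ↔ ∀ y ∈ Res x, f y = true := by
  unfold hfext
  split_ifs with h1 h2
  · simpa using h1
  · exact iff_of_false (by simp) h1
  · exact iff_of_false (by simp) h1

lemma hfext_false_iff (f : (ι → Bool) → Bool) (x : ι → Option Bool) :
    hfext f x = some false ↔ ∀ y ∈ Res x, f y = false := by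
  unfold hfext
  split_ifs with h1 h2
  · refine iff_of_false (by simp) (fun h => ?_)
    obtain ⟨y, hy⟩ := res_nonempty x
    have := h1 y hy; have := h y hy; simp_all
  · simpa using h2
  · exact iff_of_false (by simp) h2

lemma asnSize_lt_of_sub [Fintype ι] {r q : ι → Option Bool}
    (h : SubAsn r q) (hne : r ≠ q) : asnSize r < asnSize q := by
  apply Finset.card_lt_card
  constructor
  · intro i hi
    simp only [Finset.mem_filter, Finset.mem_univ, true_and] at hi ⊢
    obtain ⟨b, hb⟩ := Option.ne_none_iff_exists'.mp hi
    simp [h i b hb]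
  · intro hsub
    apply hne; funext i
    cases hri : r i with
    | some b => rw [h i b hri]
    | none =>
      by_cases hq : q i = none
      · rw [hq]
      · have hmem : i ∈ Finset.univ.filter fun j => q j ≠ none := by
          simp [hq]
        have := hsub hmem
        simp only [Finset.mem_filter, Finset.mem_univ, true_and] at this
        exact absurd hri this

lemma exists_prime_implicant_below_aux [Fintype ι] (f : (ι → Bool) → Bool)
    (m : ℕ) : ∀ q : ι → Option Bool, asnSize q ≤ m → IsImplicant f q →
    ∃ q', SubAsn q' q ∧ IsPrimeImplicant f q' := by
  induction m using Nat.strong_induction_on with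
  | _ m ih =>
    intro q hqm hq
    by_cases hp : IsPrimeImplicant f q
    · exact ⟨q, fun i b h => h, hp⟩
    · rw [IsPrimeImplicant] at hp
      push_neg at hp
      obtain ⟨r, hr, hrne, hri⟩ := hp hq
      obtain ⟨q', hs, hpr⟩ :=
        ih (asnSize r) (lt_of_lt_of_le (asnSize_lt_of_sub hr hrne) hqm)
          r le_rfl hri
      exact ⟨q', fun i b h => hr i b (hs i b h), hpr⟩

lemma exists_prime_implicant_below [Fintype ι] (f : (ι → Bool) → Bool)
    (q : ι → Option Bool) (hq : IsImplicant f q) :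
    ∃ q', SubAsn q' q ∧ IsPrimeImplicant f q' :=
  exists_prime_implicant_below_aux f (asnSize q) q le_rfl hq

lemma ccULevel_true_eq [Fintype ι] [DecidableEq ι]
    (f : (ι → Bool) → Bool) (k : ℕ)
    (hex : ∃ P, IsPrimeImplicant f P ∧ asnSize P = k)
    (hmax : ∀ P, IsPrimeImplicant f P → asnSize P ≤ k) :
    ccULevel f (some true) = k := by
  apply le_antisymm
  · -- upper bound
    apply Finset.sup_le
    intro x hx
    simp only [Finset.mem_filter, Finset.mem_univ, true_and] at hx
    have hImp : IsImplicant f x := fun y hy => (hfext_true_iff f x).mp hx y hy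
    obtain ⟨q', hsub, hprime⟩ := exists_prime_implicant_below f x hImp
    set p : ι → Option (Option Bool) := fun i => (q' i).map some with hp
    have hcert : IsCert f x p := by
      constructor
      · intro i v h
        simp only [hp, Option.map_eq_some_iff] at h
        obtain ⟨b, hb, rfl⟩ := h
        exact hsub i b hb
      · intro y hy
        rw [hx]
        refine (hfext_true_iff f y).mpr fun z hz => ?_
        refine hprime.1 z fun i b hb => ?_
        have hpi : p i = some (some b) := by simp [hp, hb]
        exact hz i b (hy i (some b) hpi)
    have hsize : certSize p = asnSize q' := by
      unfold certSize asnSize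
      congr 1
      ext i
      simp [hp]
    calc ccAt f x ≤ certSize p := Nat.sInf_le ⟨p, hcert, rfl⟩
      _ = asnSize q' := hsize
      _ ≤ k := hmax q' hprime
  · -- lower bound
    obtain ⟨P, hP, hPk⟩ := hex
    have hx : hfext f P = some true :=
      (hfext_true_iff f P).mpr fun y hy => hP.1 y hy
    have hmem : P ∈ Finset.univ.filter fun x => hfext f x = some true := by
      simp [hx]
    refine le_trans ?_ (Finset.le_sup hmem)
    -- k ≤ ccAt f P
    have hne : {m | ∃ p, IsCert f P p ∧ certSize p = m}.Nonempty := by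
      refine ⟨certSize (fun i => some (P i)), fun i => some (P i), ⟨?_, ?_⟩, rfl⟩
      · intro i v h; exact Option.some_inj.mp h
      · intro y hy
        have : y = P := funext fun i => hy i (P i) rfl
        rw [this]
    obtain ⟨p, hcert, hsize⟩ := Nat.sInf_mem hne
    unfold ccAt
    rw [← hsize, ← hPk]
    apply Finset.card_le_card
    intro i hi
    simp only [Finset.mem_filter, Finset.mem_univ, true_and] at hi ⊢
    intro hpi
    obtain ⟨b, hb⟩ := Option.ne_none_iff_exists'.mp hi
    set y : ι → Option Bool := Function.update P i none with hy
    have hcons : Consistent y p := by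
      intro j v h
      by_cases hji : j = i
      · subst hji; exact absurd h (by simp [hpi])
      · rw [hy, Function.update_of_ne hji]
        exact hcert.1 j v h
    have hyval : hfext f y = some true := by
      rw [hcert.2 y hcons, hx]
    have hyImp : IsImplicant f y := fun z hz => (hfext_true_iff f y).mp hyval z hz
    have hysub : SubAsn y P := by
      intro j c h
      by_cases hji : j = i
      · subst hji; simp [hy, Function.update_self] at h
      · rwa [hy, Function.update_of_ne hji] at h
    have hyne : y ≠ P := by
      intro h
      have := congrFun h i
      simp [hy, Function.update_self, hb] at this
    exact hP.2 y hysub hyne hyImp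

lemma hfext_eq_none (f : (ι → Bool) → Bool) (x : ι → Option Bool)
    (h1 : ¬∀ y ∈ Res x, f y = true) (h2 : ¬∀ y ∈ Res x, f y = false) :
    hfext f x = none := by
  unfold hfext; rw [if_neg h1, if_neg h2]

lemma hfext_not (f : (ι → Bool) → Bool) (x : ι → Option Bool) :
    hfext (fun y => !f y) x = Option.map (fun b => !b) (hfext f x) := by
  by_cases ht : ∀ y ∈ Res x, f y = true <;>
    by_cases hf : ∀ y ∈ Res x, f y = false
  · obtain ⟨y, hy⟩ := res_nonempty x
    have := ht y hy; have := hf y hy; simp_all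
  · rw [(hfext_true_iff f x).mpr ht,
      (hfext_false_iff (fun y => !f y) x).mpr (by simpa using ht)]
    rfl
  · rw [(hfext_false_iff f x).mpr hf,
      (hfext_true_iff (fun y => !f y) x).mpr (by simpa using hf)]
    rfl
  · rw [hfext_eq_none f x ht hf,
      hfext_eq_none (fun y => !f y) x (by simpa using hf) (by simpa using ht)]
    rfl

lemma bnot_inj : Function.Injective (fun b : Bool => !b) := by
  intro a b h; cases a <;> cases b <;> simp_all

lemma hfext_not_eq_iff (f : (ι → Bool) → Bool) (x : ι → Option Bool)
    (v : Option Bool) :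
    hfext (fun y => !f y) x = Option.map (fun b => !b) v ↔ hfext f x = v := by
  rw [hfext_not]
  exact ⟨fun h => Option.map_injective bnot_inj h, fun h => by rw [h]⟩

lemma ccAt_not [Fintype ι] (f : (ι → Bool) → Bool) (x : ι → Option Bool) :
    ccAt (fun y => !f y) x = ccAt f x := by
  unfold ccAt
  congr 1
  ext m
  constructor <;> rintro ⟨p, ⟨hc, he⟩, rfl⟩ <;>
    refine ⟨p, ⟨hc, fun y hy => ?_⟩, rfl⟩
  · have := he y hy
    rw [hfext_not, hfext_not] at this
    exact Option.map_injective bnot_inj this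
  · rw [hfext_not, hfext_not, he y hy]

lemma ccULevel_not [Fintype ι] [DecidableEq ι] (f : (ι → Bool) → Bool) :
    ccULevel (fun y => !f y) (some true) = ccULevel f (some false) := by
  unfold ccULevel
  apply Finset.sup_congr
  · ext x
    simp only [Finset.mem_filter, Finset.mem_univ, true_and]
    exact hfext_not_eq_iff f x (some false)
  · intro x _
    exact ccAt_not f x

lemma implicant_not_iff (f : (ι → Bool) → Bool) (q : ι → Option Bool) :
    IsImplicant (fun y => !f y) q ↔ IsImplicate f q := by
  unfold IsImplicant IsImplicate
  simp

lemma prime_implicant_not_iff (f : (ι → Bool) → Bool) (q : ι → Option Bool) :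
    IsPrimeImplicant (fun y => !f y) q ↔ IsPrimeImplicate f q := by
  unfold IsPrimeImplicant IsPrimeImplicate
  simp only [implicant_not_iff]

end Aux

/-- `cc_u^(1)(f) = k1` and `cc_u^(0)(f) = k2` where `k1`, `k2` are the sizes of
largest prime implicants and implicates of `f`. -/
theorem stmt6 {n : ℕ} (f : (Fin n → Bool) → Bool)
    (hnc : ∃ y z : Fin n → Bool, f y ≠ f z)
    (k1 k2 : ℕ)
    (hk1ex : ∃ P : Fin n → Option Bool, IsPrimeImplicant f P ∧ asnSize P = k1)
    (hk1max : ∀ P : Fin n → Option Bool, IsPrimeImplicant f P → asnSize P ≤ k1)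
    (hk2ex : ∃ Q : Fin n → Option Bool, IsPrimeImplicate f Q ∧ asnSize Q = k2)
    (hk2max : ∀ Q : Fin n → Option Bool, IsPrimeImplicate f Q → asnSize Q ≤ k2) :
    ccULevel f (some true) = k1 ∧ ccULevel f (some false) = k2 := by
  constructor
  · exact ccULevel_true_eq f k1 hk1ex hk1max
  · rw [← ccULevel_not f]
    refine ccULevel_true_eq _ k2 ?_ ?_
    · obtain ⟨Q, hQ, hQk⟩ := hk2ex
      exact ⟨Q, (prime_implicant_not_iff f Q).mpr hQ, hQk⟩
    · intro Q hQ
      exact hk2max Q ((prime_implicant_not_iff f Q).mp hQ)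
end
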